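/- Let g be a Lie algebra over a field F of characteristic zero acting faithfully on the category of integrable g-modules (with respect to fixed generating sets E_d of diagonalizable and E_ln of locally nilpotent elements). Let U(g)^* carry the left action (x ▹ h)(y) = h(yx). Then the algebra of matrix coefficients of integrable modules and their full duals equals the maximal integrable g-submodule of U(g)^*: a functional h ∈ U(g)^* is of the form h(x) = φ(x·v) for some integrable g-module V, v ∈ V, φ ∈ V^*, if and only if the cyclic submodule U(g) ▹ h of U(g)^* is integrable. -/

import Mathlib

universe u

/-- The right-regular representation on the dual of the enveloping algebra:
`rightMulDual F g x h = x ▹ h`, where `(x ▹ h)(y) = h(yx)`. -/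
noncomputable def rightMulDual (F : Type u) (g : Type u) [Field F] [LieRing g]
    [LieAlgebra F g] (x : UniversalEnvelopingAlgebra F g) :
    Module.End F (Module.Dual F (UniversalEnvelopingAlgebra F g)) :=
  LinearMap.lcomp F F (LinearMap.mulRight F x)

/-!
A matrix coefficient `h = (x ↦ φ (x • v))` of a module `V` is the image of `v` under the
`U(g)`-linear map `w ↦ (x ↦ φ (x • w))` from `V` to `U(g)^*`, so the cyclic submodule
`U(g) ▹ h` is a quotient of a submodule of `V`: eigenvectors map to eigenvectors and nilpotent
actions stay nilpotent. Conversely `U(g) ▹ h` is itself a module containing `h`, and `h` is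
recovered from it by evaluation at `1`, because `(x ▹ h) 1 = h x`. The only non-formal point is
that a submodule of a sum of eigenspaces stable under the operator is again spanned by
eigenvectors; this holds since the projection of a finite sum of eigenvectors onto one eigenvalue
is a Lagrange interpolation polynomial in the operator.
-/

open Polynomial UniversalEnvelopingAlgebra

namespace Module.End

lemma map_eigenspace_le {R V W : Type*} [CommRing R] [AddCommGroup V] [Module R V]
    [AddCommGroup W] [Module R W] {f : End R V} {f' : End R W} {T : V →ₗ[R] W}
    (hT : ∀ w, T (f w) = f' (T w)) (μ : R) :
    (f.eigenspace μ).map T ≤ f'.eigenspace μ := by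
  rintro _ ⟨v, hv, rfl⟩
  rw [SetLike.mem_coe, mem_eigenspace_iff] at hv
  rw [mem_eigenspace_iff, ← hT, hv, map_smul]

variable {K V : Type*} [Field K] [AddCommGroup V] [Module K V]

lemma aeval_lagrangeBasis_apply_sum {ι : Type*} [DecidableEq ι] {f : End K V}
    {μ : ι → K} (hμ : Function.Injective μ) {c : ι →₀ V}
    (hc : ∀ i, c i ∈ f.eigenspace (μ i)) {i : ι} (hi : i ∈ c.support) :
    aeval f (Lagrange.basis c.support μ i) (c.sum fun _ v ↦ v) = c i := by
  rw [Finsupp.sum, map_sum, Finset.sum_eq_single i]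
  · rw [aeval_apply_of_hasEigenvector ⟨hc i, Finsupp.mem_support_iff.mp hi⟩,
      Lagrange.eval_basis_self hμ.injOn hi, one_smul]
  · intro j hj hji
    rw [aeval_apply_of_hasEigenvector ⟨hc j, Finsupp.mem_support_iff.mp hj⟩,
      Lagrange.eval_basis_of_ne hji.symm hj, zero_smul]
  · exact fun h ↦ absurd hi h

theorem _root_.Submodule.inf_iSup_eigenspace {ι : Type*} {p : Submodule K V} {f : End K V}
    (hp : ∀ x ∈ p, f x ∈ p) {μ : ι → K} (hμ : Function.Injective μ) :
    p ⊓ ⨆ i, f.eigenspace (μ i) = ⨆ i, p ⊓ f.eigenspace (μ i) := by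
  classical
  refine le_antisymm ?_ (le_inf (iSup_le fun i ↦ inf_le_left) (iSup_mono fun i ↦ inf_le_right))
  rintro w ⟨hwp, hw⟩
  obtain ⟨c, hc, rfl⟩ := (Submodule.mem_iSup_iff_exists_finsupp _ _).mp hw
  have hcp : ∀ i, c i ∈ p := by
    intro i
    by_cases hi : i ∈ c.support
    · rw [← aeval_lagrangeBasis_apply_sum hμ hc hi]
      exact aeval_apply_smul_mem_of_le_comap hwp _ f hp
    · rw [Finsupp.notMem_support_iff.mp hi]
      exact p.zero_mem
  exact (Submodule.mem_iSup_iff_exists_finsupp _ _).mpr ⟨c, fun i ↦ ⟨hcp i, hc i⟩, rfl⟩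

theorem iSup_eigenspace_restrict_eq_top {ι : Type*} {p : Submodule K V} {f : End K V}
    (hp : ∀ x ∈ p, f x ∈ p) {μ : ι → K} (hμ : Function.Injective μ)
    (hle : p ≤ ⨆ i, f.eigenspace (μ i)) :
    ⨆ i, eigenspace (f.restrict hp) (μ i) = ⊤ := by
  apply Submodule.map_injective_of_injective p.injective_subtype
  simp_rw [Submodule.map_iSup, Submodule.map_top, Submodule.range_subtype,
    ← Submodule.inf_genEigenspace f p hp, ← Submodule.inf_iSup_eigenspace hp hμ]
  exact inf_eq_left.mpr hle

end Module.End

namespace AlgHom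

variable {R A M : Type*} [CommRing R] [Ring A] [Algebra R A] [AddCommGroup M] [Module R M]
  (π : A →ₐ[R] Module.End R M)

def cyclicSpan (m : M) : Submodule R M :=
  Submodule.span R (Set.range fun a ↦ π a m)

variable {π} {m : M}

lemma self_mem_cyclicSpan : m ∈ π.cyclicSpan m :=
  Submodule.subset_span ⟨1, by simp⟩

lemma apply_mem_cyclicSpan (a : A) {x : M} (hx : x ∈ π.cyclicSpan m) :
    π a x ∈ π.cyclicSpan m := by
  refine Submodule.span_induction ?_ (by simp) (fun _ _ _ _ hx hy ↦ by simpa using add_mem hx hy)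
    (fun c _ _ hx ↦ by simpa using Submodule.smul_mem _ c hx) hx
  rintro _ ⟨b, rfl⟩
  exact Submodule.subset_span ⟨a * b, by simp⟩

variable (π m) in
@[simps]
def cyclicRestrict : A →ₐ[R] Module.End R (π.cyclicSpan m) where
  toFun a := (π a).restrict fun _ ↦ apply_mem_cyclicSpan a
  map_one' := by ext; simp
  map_mul' a b := by ext; simp
  map_zero' := by ext; simp
  map_add' a b := by ext; simp
  commutes' r := by ext; simp

end AlgHom

section Intertwiner

variable {R A V M : Type*} [CommRing R] [Ring A] [Algebra R A] [AddCommGroup V] [Module R V]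
  [AddCommGroup M] [Module R M] {L : A →ₐ[R] Module.End R V} {π : A →ₐ[R] Module.End R M}
  {T : V →ₗ[R] M}

lemma cyclicSpan_le_range_of_intertwines (hT : ∀ a w, T (L a w) = π a (T w)) (v : V) :
    π.cyclicSpan (T v) ≤ LinearMap.range T := by
  rw [AlgHom.cyclicSpan, Submodule.span_le]
  rintro _ ⟨a, rfl⟩
  exact ⟨L a v, hT a v⟩

lemma range_le_iSup_eigenspace_of_intertwines (hT : ∀ a w, T (L a w) = π a (T w)) {ι : Type*}
    {μ : ι → R} {a : A} (ha : ⨆ i, Module.End.eigenspace (L a) (μ i) = ⊤) :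
    LinearMap.range T ≤ ⨆ i, Module.End.eigenspace (π a) (μ i) := by
  rw [LinearMap.range_eq_map, ← ha, Submodule.map_iSup]
  exact iSup_mono fun i ↦ Module.End.map_eigenspace_le (hT a) _

lemma exists_pow_apply_eq_zero_of_intertwines (hT : ∀ a w, T (L a w) = π a (T w)) {a : A}
    (ha : ∀ w, ∃ k : ℕ, (L a ^ k) w = 0) {x : M} (hx : x ∈ LinearMap.range T) :
    ∃ k : ℕ, (π a ^ k) x = 0 := by
  obtain ⟨w, rfl⟩ := hx
  obtain ⟨k, hk⟩ := ha w
  exact ⟨k, by rw [← map_pow, ← hT, map_pow, hk, map_zero]⟩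

end Intertwiner

namespace AlgHom

variable {K A M : Type*} [Field K] [Ring A] [Algebra K A] [AddCommGroup M] [Module K M]
  {π : A →ₐ[K] Module.End K M} {m : M} {a : A}

lemma iSup_eigenspace_cyclicRestrict_eq_top {ι : Type*} {μ : ι → K}
    (hμ : Function.Injective μ)
    (hle : π.cyclicSpan m ≤ ⨆ i, Module.End.eigenspace (π a) (μ i)) :
    ⨆ i, Module.End.eigenspace (π.cyclicRestrict m a) (μ i) = ⊤ :=
  Module.End.iSup_eigenspace_restrict_eq_top (fun _ ↦ apply_mem_cyclicSpan a) hμ hle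

lemma exists_pow_cyclicRestrict_apply_eq_zero
    (ha : ∀ x ∈ π.cyclicSpan m, ∃ k : ℕ, (π a ^ k) x = 0) (x : π.cyclicSpan m) :
    ∃ k : ℕ, (π.cyclicRestrict m a ^ k) x = 0 := by
  obtain ⟨k, hk⟩ := ha x x.2
  refine ⟨k, Subtype.ext ?_⟩
  rw [← map_pow, cyclicRestrict_apply, LinearMap.coe_restrict_apply, map_pow, hk]
  rfl

end AlgHom

attribute [local instance 100] LieRing.ofAssociativeRing

section EnvelopingAlgebra

variable {F : Type u} [Field F] {g : Type u} [LieRing g] [LieAlgebra F g]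

@[simp]
lemma rightMulDual_apply (x y : UniversalEnvelopingAlgebra F g)
    (f : Module.Dual F (UniversalEnvelopingAlgebra F g)) :
    rightMulDual F g x f y = f (y * x) := rfl

variable (F g) in
noncomputable def rightMulDualAlgHom :
    UniversalEnvelopingAlgebra F g →ₐ[F]
      Module.End F (Module.Dual F (UniversalEnvelopingAlgebra F g)) where
  toFun := rightMulDual F g
  map_one' := by ext; simp
  map_mul' x y := by ext; simp [mul_assoc]
  map_zero' := by ext; simp
  map_add' x y := by ext; simp [mul_add]
  commutes' c := by ext; simp [Algebra.algebraMap_eq_smul_one]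

@[simp]
lemma rightMulDualAlgHom_apply (x : UniversalEnvelopingAlgebra F g) :
    rightMulDualAlgHom F g x = rightMulDual F g x := rfl

variable {V : Type*} [AddCommGroup V] [Module F V]

noncomputable def matrixCoeff (L : UniversalEnvelopingAlgebra F g →ₐ[F] Module.End F V)
    (φ : Module.Dual F V) : V →ₗ[F] Module.Dual F (UniversalEnvelopingAlgebra F g) :=
  (L.toLinearMap : UniversalEnvelopingAlgebra F g →ₗ[F] V →ₗ[F] V).flip.compr₂ φ

@[simp]
lemma matrixCoeff_apply (L : UniversalEnvelopingAlgebra F g →ₐ[F] Module.End F V)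
    (φ : Module.Dual F V) (w : V) (y : UniversalEnvelopingAlgebra F g) :
    matrixCoeff L φ w y = φ (L y w) := rfl

lemma matrixCoeff_intertwines (L : UniversalEnvelopingAlgebra F g →ₐ[F] Module.End F V)
    (φ : Module.Dual F V) (x : UniversalEnvelopingAlgebra F g) (w : V) :
    matrixCoeff L φ (L x w) = rightMulDualAlgHom F g x (matrixCoeff L φ w) := by
  ext y
  simp [map_mul]

noncomputable def cyclicRep (π : UniversalEnvelopingAlgebra F g →ₐ[F] Module.End F V) (v : V) :
    g →ₗ⁅F⁆ Module.End F (π.cyclicSpan v) :=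
  (π.cyclicRestrict v).toLieHom.comp (ι F)

lemma lift_cyclicRep (π : UniversalEnvelopingAlgebra F g →ₐ[F] Module.End F V) (v : V) :
    lift F (cyclicRep π v) = π.cyclicRestrict v :=
  ((lift_unique F _ _).mp rfl).symm

end EnvelopingAlgebra

theorem stmt18_general {F : Type u} [Field F] [CharZero F]
    {g : Type u} [LieRing g] [LieAlgebra F g] (Ed Eln : Set g)
    (h : Module.Dual F (UniversalEnvelopingAlgebra F g)) :
    (∃ (V : Type u) (_ : AddCommGroup V) (_ : Module F V)
        (ρ : g →ₗ⁅F⁆ Module.End F V),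
        (∀ e ∈ Ed, (⨆ n : ℤ, Module.End.eigenspace (ρ e) (n : F)) = ⊤) ∧
        (∀ e ∈ Eln, ∀ v : V, ∃ k : ℕ, ((ρ e) ^ k) v = 0) ∧
        ∃ (v : V) (φ : Module.Dual F V),
          ∀ x : UniversalEnvelopingAlgebra F g,
            h x = φ ((UniversalEnvelopingAlgebra.lift F ρ x) v)) ↔
      ((∀ e ∈ Ed,
          Submodule.span F (Set.range fun x => rightMulDual F g x h) ≤
            ⨆ n : ℤ, Module.End.eigenspace
              (rightMulDual F g (UniversalEnvelopingAlgebra.ι F e)) (n : F)) ∧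
        (∀ e ∈ Eln,
          ∀ f ∈ Submodule.span F (Set.range fun x => rightMulDual F g x h),
            ∃ k : ℕ,
              ((rightMulDual F g (UniversalEnvelopingAlgebra.ι F e)) ^ k) f = 0)) := by
  constructor
  · rintro ⟨V, _, _, ρ, hd, hln, v, φ, hmc⟩
    have hT := matrixCoeff_intertwines (lift F ρ) φ
    obtain rfl : h = matrixCoeff (lift F ρ) φ v := LinearMap.ext hmc
    refine ⟨fun e he ↦ (cyclicSpan_le_range_of_intertwines hT v).trans
        (range_le_iSup_eigenspace_of_intertwines hT ?_),
      fun e he f hf ↦ exists_pow_apply_eq_zero_of_intertwines hT ?_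
        (cyclicSpan_le_range_of_intertwines hT v hf)⟩
    · rw [lift_ι_apply]
      exact hd e he
    · simpa only [lift_ι_apply] using hln e he
  · rintro ⟨hEd, hEln⟩
    let π := rightMulDualAlgHom F g
    refine ⟨π.cyclicSpan h, inferInstance, inferInstance, cyclicRep π h,
      fun e he ↦ AlgHom.iSup_eigenspace_cyclicRestrict_eq_top Int.cast_injective (hEd e he),
      fun e he ↦ AlgHom.exists_pow_cyclicRestrict_apply_eq_zero (hEln e he),
      ⟨h, AlgHom.self_mem_cyclicSpan⟩,
      LinearMap.applyₗ (1 : UniversalEnvelopingAlgebra F g) ∘ₗ (π.cyclicSpan h).subtype,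
      fun x ↦ ?_⟩
    simp [lift_cyclicRep, π]

/-- let `g` act faithfully on the category of integrable `g`-modules
(with respect to `Ed`, `Eln`); a `g`-module is given by a Lie algebra morphism
`ρ : g → End(V)`, and it is integrable when the elements of `Ed` act diagonalizably
with integer eigenvalues and those of `Eln` act locally nilpotently.  Then a linear
functional `h ∈ U(g)^*` is a matrix coefficient `h(x) = φ(x·v)` of an integrable
module (with `v ∈ V`, `φ ∈ V^*`) if and only if the cyclic submodule
`U(g) ▹ h ⊆ U(g)^*` (under `(x ▹ h)(y) = h(yx)`) is integrable, i.e. the matrix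
coefficient algebra equals the integrable part of `U(g)^*`. -/
theorem stmt18 {F : Type u} [Field F] [CharZero F]
    {g : Type u} [LieRing g] [LieAlgebra F g] (Ed Eln : Set g)
    (hfaithful : ∀ z : g, z ≠ 0 →
      ∃ (V : Type u) (_ : AddCommGroup V) (_ : Module F V)
        (ρ : g →ₗ⁅F⁆ Module.End F V),
        (∀ e ∈ Ed, (⨆ n : ℤ, Module.End.eigenspace (ρ e) (n : F)) = ⊤) ∧
        (∀ e ∈ Eln, ∀ v : V, ∃ k : ℕ, ((ρ e) ^ k) v = 0) ∧ ρ z ≠ 0)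
    (h : Module.Dual F (UniversalEnvelopingAlgebra F g)) :
    (∃ (V : Type u) (_ : AddCommGroup V) (_ : Module F V)
        (ρ : g →ₗ⁅F⁆ Module.End F V),
        (∀ e ∈ Ed, (⨆ n : ℤ, Module.End.eigenspace (ρ e) (n : F)) = ⊤) ∧
        (∀ e ∈ Eln, ∀ v : V, ∃ k : ℕ, ((ρ e) ^ k) v = 0) ∧
        ∃ (v : V) (φ : Module.Dual F V),
          ∀ x : UniversalEnvelopingAlgebra F g,
            h x = φ ((UniversalEnvelopingAlgebra.lift F ρ x) v)) ↔
      ((∀ e ∈ Ed,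
          Submodule.span F (Set.range fun x => rightMulDual F g x h) ≤
            ⨆ n : ℤ, Module.End.eigenspace
              (rightMulDual F g (UniversalEnvelopingAlgebra.ι F e)) (n : F)) ∧
        (∀ e ∈ Eln,
          ∀ f ∈ Submodule.span F (Set.range fun x => rightMulDual F g x h),
            ∃ k : ℕ,
              ((rightMulDual F g (UniversalEnvelopingAlgebra.ι F e)) ^ k) f = 0)) :=
  stmt18_general Ed Eln h
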